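/- arXiv:1206.5441 — 3 statements merged into one kernel-verified Lean document; each statement's English description precedes it below -/
import Mathlib

section
/- Let f, f₁, …, f_ℓ be nonnegative functions in L¹_loc(ℝ²) and let α₁, …, α_ℓ > 0 be given exponents. Then there exists δ₀ > 0, depending only on α₁, …, α_ℓ, with the following property: if for some δ ∈ (0, δ₀) there is a constant C(δ) > 0 such that ∫_{Q_R(z)} f dx ≤ δ ∫_{Q_{2R}(z)} f dx + C(δ) Σ_{j=1}^ℓ R^{−α_j} ∫_{Q_{2R}(z)} f_j dx holds for every square Q_R(z) ⊂ ℝ², then there exists a constant C such that ∫_{Q_R(z)} f dx ≤ C Σ_{j=1}^ℓ R^{−α_j} ∫_{Q_{2R}(z)} f_j dx for all squares Q_R(z). -/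
open MeasureTheory Filter Set Topology

noncomputable section

/-- The hypotheses (A1)–(A3) on the potential `h : [0,∞) → ℝ` (extended to `ℝ`):
nonnegative, of class `C²`, strictly increasing and convex on `[0,∞)`, `h''(0) > 0`,
`h(t)/t → 0` as `t → 0⁺`, doubling, and `h'(t)/t ≤ h''(t)`. -/
structure HypH (h : ℝ → ℝ) : Prop where
  smooth : ContDiff ℝ 2 h
  nonneg : ∀ t : ℝ, 0 ≤ t → 0 ≤ h t
  strictMono : StrictMonoOn h (Set.Ici (0 : ℝ))
  convex : ConvexOn ℝ (Set.Ici (0 : ℝ)) h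
  hpp0_pos : 0 < deriv (deriv h) 0
  lim_zero : Filter.Tendsto (fun t => h t / t) (nhdsWithin 0 (Set.Ioi 0)) (nhds 0)
  doubling : ∃ a : ℝ, 1 ≤ a ∧ ∀ t : ℝ, 0 ≤ t → h (2 * t) ≤ a * h t
  A3 : ∀ t : ℝ, 0 < t → deriv h t / t ≤ deriv (deriv h) t

/-- Partial derivative `∂ⱼ f` of a scalar function on `ℝ²`. -/
def pd (f : (Fin 2 → ℝ) → ℝ) (j : Fin 2) (x : Fin 2 → ℝ) : ℝ :=
  fderiv ℝ f x (Pi.single j 1)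

/-- The symmetric gradient `ε(u) = ½(Du + Duᵀ)`. -/
def eps (u : (Fin 2 → ℝ) → Fin 2 → ℝ) (x : Fin 2 → ℝ) : Fin 2 → Fin 2 → ℝ :=
  fun i j => (pd (fun y => u y i) j x + pd (fun y => u y j) i x) / 2

/-- Frobenius norm of a 2×2 matrix. -/
def frob (A : Fin 2 → Fin 2 → ℝ) : ℝ :=
  Real.sqrt (∑ i, ∑ j, A i j ^ 2)

/-- The stress tensor `T(ε) = (h'(|ε|)/|ε|) ε` (with `T(0) = 0`, by `x/0 = 0`). -/
def stress (h : ℝ → ℝ) (A : Fin 2 → Fin 2 → ℝ) : Fin 2 → Fin 2 → ℝ :=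
  fun i j => (deriv h (frob A) / frob A) * A i j

/-- Divergence-free vector field (pointwise). -/
def IsDivFree (u : (Fin 2 → ℝ) → Fin 2 → ℝ) : Prop :=
  ∀ x, (∑ i, pd (fun y => u y i) i x) = 0

/-- `u` is an entire weak solution of the generalized stationary Navier–Stokes system:
`∫ T(ε(u)) : ε(φ) dx − ∫ uᵏ uⁱ ∂ₖφⁱ dx = 0` for all divergence-free test fields `φ`. -/
def IsWeakSolution (h : ℝ → ℝ) (u : (Fin 2 → ℝ) → Fin 2 → ℝ) : Prop :=
  ∀ φ : (Fin 2 → ℝ) → Fin 2 → ℝ, ContDiff ℝ (⊤ : ℕ∞) φ → HasCompactSupport φ → IsDivFree φ →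
    (∫ x, ∑ i, ∑ j, stress h (eps u x) i j * eps φ x i j)
      - (∫ x, ∑ k, ∑ i, u x k * u x i * pd (fun y => φ y i) k x) = 0

/-- The open square `Q_R(z)` of center `z` and side length `2R`. -/
def Q (z : Fin 2 → ℝ) (R : ℝ) : Set (Fin 2 → ℝ) := {x | ∀ i, |x i - z i| < R}

/-- The open Euclidean disc `B_t(z)`. -/
def disc (z : Fin 2 → ℝ) (t : ℝ) : Set (Fin 2 → ℝ) := {x | ∑ i, (x i - z i) ^ 2 < t ^ 2}

/-- `g` is the weak partial derivative `∂ⱼ f` on `ℝ²`. -/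
def HasWeakPd (f g : (Fin 2 → ℝ) → ℝ) (j : Fin 2) : Prop :=
  ∀ φ : (Fin 2 → ℝ) → ℝ, ContDiff ℝ (⊤ : ℕ∞) φ → HasCompactSupport φ →
    (∫ x, f x * pd φ j x) = - ∫ x, g x * φ x

/-- Membership in `W₀^{1,2}(Ω, ℝ²)`, encoded via extension by zero: `v` vanishes outside
`Ω` and `v`, together with its weak gradient `Dv`, is square-integrable on `ℝ²`. -/
def MemW012 (Ω : Set (Fin 2 → ℝ)) (v : (Fin 2 → ℝ) → Fin 2 → ℝ)
    (Dv : (Fin 2 → ℝ) → Fin 2 → Fin 2 → ℝ) : Prop :=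
  (∀ i j, HasWeakPd (fun x => v x i) (fun x => Dv x i j) j) ∧
  Integrable (fun x => ∑ i, (v x i) ^ 2) ∧
  Integrable (fun x => ∑ i, ∑ j, (Dv x i j) ^ 2) ∧
  (∀ x, x ∉ Ω → v x = 0)

/-- `u ∈ W^{1,2}_loc(ℝ², ℝ²)` with weak gradient `Du`. -/
def W12loc (u : (Fin 2 → ℝ) → Fin 2 → ℝ)
    (Du : (Fin 2 → ℝ) → Fin 2 → Fin 2 → ℝ) : Prop :=
  (∀ i j, HasWeakPd (fun x => u x i) (fun x => Du x i j) j) ∧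
  (∀ z r, 0 < r → IntegrableOn (fun x => ∑ i, (u x i) ^ 2) (Q z r) volume) ∧
  (∀ z r, 0 < r → IntegrableOn (fun x => ∑ i, ∑ j, (Du x i j) ^ 2) (Q z r) volume)

/-- For `u ∈ C¹`: `u2 x i j k` is the weak partial derivative `∂ₖ ∂ⱼ uⁱ`, locally in `L²`;
this encodes `u ∈ W^{2,2}_loc(ℝ², ℝ²)`. -/
def W22loc (u : (Fin 2 → ℝ) → Fin 2 → ℝ)
    (u2 : (Fin 2 → ℝ) → Fin 2 → Fin 2 → Fin 2 → ℝ) : Prop :=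
  (∀ i j k, HasWeakPd (fun x => pd (fun y => u y i) j x) (fun x => u2 x i j k) k) ∧
  (∀ z r, 0 < r →
    IntegrableOn (fun x => ∑ i, ∑ j, ∑ k, (u2 x i j k) ^ 2) (Q z r) volume)

/-- 2×2 matrices as a Euclidean space (Frobenius norm). -/
abbrev Emat : Type := EuclideanSpace ℝ (Fin 2 × Fin 2)

/-- The matrix `A` as an element of `Emat`. -/
def toE (A : Fin 2 → Fin 2 → ℝ) : Emat := WithLp.toLp 2 (fun p : Fin 2 × Fin 2 => A p.1 p.2)

/-- `ε` is a symmetric matrix. -/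
def symmE (ε : Emat) : Prop := ∀ i j : Fin 2, ε (i, j) = ε (j, i)

/-- The Hessian bilinear form `D²H(ε)(σ, σ)` of `H(ε) = h(|ε|)`. -/
def D2H (h : ℝ → ℝ) (ε σ : Emat) : ℝ :=
  iteratedFDeriv ℝ 2 (fun e : Emat => h ‖e‖) ε ![σ, σ]

/-- `ε(∂ₖ u)` computed from the (weak) second derivatives `u2 x i j k = ∂ₖ ∂ⱼ uⁱ`. -/
def epsk (u2 : (Fin 2 → ℝ) → Fin 2 → Fin 2 → Fin 2 → ℝ) (k : Fin 2)
    (x : Fin 2 → ℝ) : Fin 2 → Fin 2 → ℝ :=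
  fun i j => (u2 x i k j + u2 x j k i) / 2

/-- `w = Σₖ D²H(ε(u))(ε(∂ₖu), ε(∂ₖu))`. -/
def wfun (h : ℝ → ℝ) (u : (Fin 2 → ℝ) → Fin 2 → ℝ)
    (u2 : (Fin 2 → ℝ) → Fin 2 → Fin 2 → Fin 2 → ℝ) (x : Fin 2 → ℝ) : ℝ :=
  ∑ k, D2H h (toE (eps u x)) (toE (epsk u2 k x))

/-- The symmetric part of a matrix-valued weak gradient `Du`. -/
def epsD (Du : (Fin 2 → ℝ) → Fin 2 → Fin 2 → ℝ) (x : Fin 2 → ℝ) : Fin 2 → Fin 2 → ℝ :=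
  fun i j => (Du x i j + Du x j i) / 2

/-- `w` computed from the weak gradient `Du` and weak second derivatives `u2`. -/
def wfunD (h : ℝ → ℝ) (Du : (Fin 2 → ℝ) → Fin 2 → Fin 2 → ℝ)
    (u2 : (Fin 2 → ℝ) → Fin 2 → Fin 2 → Fin 2 → ℝ) (x : Fin 2 → ℝ) : ℝ :=
  ∑ k, D2H h (toE (epsD Du x)) (toE (epsk u2 k x))

namespace GMaux

open ENNReal

lemma Q_eq_ball (z : Fin 2 → ℝ) {R : ℝ} (hR : 0 < R) : Q z R = Metric.ball z R := by
  ext x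
  simp only [Q, Set.mem_setOf_eq, Metric.mem_ball, dist_pi_lt_iff hR, Real.dist_eq]

lemma Q_mono (z : Fin 2 → ℝ) {a b : ℝ} (h : a ≤ b) : Q z a ⊆ Q z b :=
  fun _ hx i => lt_of_lt_of_le (hx i) h

lemma measurableSet_Q (z : Fin 2 → ℝ) (R : ℝ) : MeasurableSet (Q z R) := by
  rcases lt_or_ge 0 R with hR | hR
  · rw [Q_eq_ball z hR]; exact measurableSet_ball
  · have : Q z R = ∅ := by
      ext x
      simp only [Q, Set.mem_setOf_eq, Set.mem_empty_iff_false, iff_false, not_forall]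
      exact ⟨0, fun h => (((abs_nonneg _).trans_lt h).not_ge hR)⟩
    rw [this]; exact MeasurableSet.empty

lemma integrableOn_Q {f : (Fin 2 → ℝ) → ℝ} (hf : MeasureTheory.LocallyIntegrable f volume)
    (z : Fin 2 → ℝ) (R : ℝ) : IntegrableOn f (Q z R) volume := by
  have hsub : Q z R ⊆ Metric.closedBall z |R| := by
    intro x hx
    rw [Metric.mem_closedBall, dist_pi_le_iff (abs_nonneg R)]
    intro i
    rw [Real.dist_eq]
    exact ((hx i).trans_le (le_abs_self R)).le
  exact (hf.integrableOn_isCompact (isCompact_closedBall z |R|)).mono_set hsub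

lemma meas_Q_ne_top {f : (Fin 2 → ℝ) → ℝ} (h0 : ∀ x, 0 ≤ f x)
    (hf : MeasureTheory.LocallyIntegrable f volume) (z : Fin 2 → ℝ) (R : ℝ) :
    (volume.withDensity fun x => ENNReal.ofReal (f x)) (Q z R) ≠ ∞ := by
  rw [withDensity_apply _ (measurableSet_Q z R)]
  have h := (integrableOn_Q hf z R).hasFiniteIntegral
  rw [hasFiniteIntegral_iff_ofReal (Filter.Eventually.of_forall h0)] at h
  exact h.ne

lemma setIntegral_eq_toReal {f : (Fin 2 → ℝ) → ℝ} (h0 : ∀ x, 0 ≤ f x)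
    (hf : MeasureTheory.LocallyIntegrable f volume) (z : Fin 2 → ℝ) (R : ℝ) :
    ∫ x in Q z R, f x
      = ((volume.withDensity fun x => ENNReal.ofReal (f x)) (Q z R)).toReal := by
  rw [withDensity_apply _ (measurableSet_Q z R)]
  exact MeasureTheory.integral_eq_lintegral_of_nonneg_ae (Filter.Eventually.of_forall h0)
    (integrableOn_Q hf z R).aestronglyMeasurable

lemma overlap {ι : Type*} (m : Measure (Fin 2 → ℝ)) (I : Finset ι)
    (A : ι → Set (Fin 2 → ℝ)) (S : Set (Fin 2 → ℝ)) (hS : MeasurableSet S)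
    (hA : ∀ k, MeasurableSet (A k)) (N : ℝ≥0∞)
    (hcard : ∀ x, ∑ k ∈ I, (A k).indicator (fun _ => (1 : ℝ≥0∞)) x
        ≤ N * S.indicator (fun _ => (1 : ℝ≥0∞)) x) :
    ∑ k ∈ I, m (A k) ≤ N * m S := by
  have h1 : ∀ k : ι, m (A k) = ∫⁻ x, (A k).indicator (fun _ => (1 : ℝ≥0∞)) x ∂m := by
    intro k
    rw [lintegral_indicator (hA k)]
    exact (setLIntegral_one _).symm
  calc ∑ k ∈ I, m (A k)
      = ∫⁻ x, ∑ k ∈ I, (A k).indicator (fun _ => (1 : ℝ≥0∞)) x ∂m := by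
        rw [MeasureTheory.lintegral_finset_sum _
          (fun k _ => (measurable_const.indicator (hA k)))]
        exact Finset.sum_congr rfl fun k _ => h1 k
    _ ≤ ∫⁻ x, N * S.indicator (fun _ => (1 : ℝ≥0∞)) x ∂m := lintegral_mono hcard
    _ = N * m S := by
        rw [lintegral_const_mul _ (measurable_const.indicator hS), lintegral_indicator hS,
          setLIntegral_one]

lemma cover (z : Fin 2 → ℝ) {t r s : ℝ} (ht : 0 < t) (hr : 0 < r) (hs : t + 4 * r ≤ s) :
    ∃ (I : Finset (Fin 2 → ℤ)) (ctr : (Fin 2 → ℤ) → Fin 2 → ℝ),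
      (Q z t ⊆ ⋃ k ∈ I, Q (ctr k) r) ∧
      (∀ k ∈ I, Q (ctr k) (2 * r) ⊆ Q z s) ∧
      (∀ x, ∑ k ∈ I, (Q (ctr k) (2 * r)).indicator (fun _ => (1 : ℝ≥0∞)) x
          ≤ 16 * (Q z s).indicator (fun _ => (1 : ℝ≥0∞)) x) := by
  classical
  set K : ℤ := ⌈t / r⌉ + 1 with hK
  have hKR : (K : ℝ) ≤ t / r + 2 := by
    rw [hK]; push_cast
    linarith [Int.ceil_lt_add_one (t / r)]
  have htrK : t / r + 1 ≤ (K : ℝ) := by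
    rw [hK]; push_cast
    linarith [Int.le_ceil (t / r)]
  have hincl : ∀ k ∈ Fintype.piFinset (fun _ : Fin 2 => Finset.Icc (-K) K),
      Q (fun i => z i + r * (k i : ℝ)) (2 * r) ⊆ Q z s := by
    intro k hk x hx i
    rw [Fintype.mem_piFinset] at hk
    have hki : |(k i : ℝ)| ≤ (K : ℝ) := by
      have := hk i
      rw [Finset.mem_Icc, ← abs_le] at this
      exact_mod_cast this
    have h2 : |r * (k i : ℝ)| ≤ r * (t / r + 2) := by
      rw [abs_mul, abs_of_pos hr]
      exact mul_le_mul_of_nonneg_left (hki.trans hKR) hr.le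
    have h3 : r * (t / r + 2) = t + 2 * r := by field_simp
    have h4 := hx i
    calc |x i - z i| = |(x i - (z i + r * (k i : ℝ))) + r * (k i : ℝ)| := by congr 1; ring
      _ ≤ |x i - (z i + r * (k i : ℝ))| + |r * (k i : ℝ)| := abs_add_le _ _
      _ < 2 * r + (t + 2 * r) := by rw [← h3]; linarith
      _ ≤ s := by linarith
  refine ⟨Fintype.piFinset (fun _ : Fin 2 => Finset.Icc (-K) K),
    fun k i => z i + r * (k i : ℝ), ?_, hincl, ?_⟩
  · -- covering
    intro x hx
    set k : Fin 2 → ℤ := fun i => round ((x i - z i) / r) with hk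
    have hmem : ∀ i, |x i - (z i + r * (k i : ℝ))| ≤ r / 2 := by
      intro i
      have : x i - (z i + r * (k i : ℝ)) = r * ((x i - z i) / r - (k i : ℝ)) := by
        field_simp
        ring
      rw [this, abs_mul, abs_of_pos hr]
      have := abs_sub_round ((x i - z i) / r)
      calc r * |(x i - z i) / r - (k i : ℝ)| ≤ r * (1 / 2) := by
            exact mul_le_mul_of_nonneg_left this hr.le
        _ = r / 2 := by ring
    refine Set.mem_iUnion₂.2 ⟨k, ?_, ?_⟩
    · rw [Fintype.mem_piFinset]
      intro i
      rw [Finset.mem_Icc, ← abs_le]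
      have h1 : |(k i : ℝ)| ≤ (K : ℝ) := by
        have h2 : |(k i : ℝ)| ≤ |(x i - z i) / r| + 1 / 2 := by
          have := abs_sub_round ((x i - z i) / r)
          calc |(k i : ℝ)| = |(x i - z i) / r - ((x i - z i) / r - (k i : ℝ))| := by
                congr 1; ring
            _ ≤ |(x i - z i) / r| + |(x i - z i) / r - (k i : ℝ)| := abs_sub _ _
            _ ≤ |(x i - z i) / r| + 1 / 2 := by linarith
        have h3 : |(x i - z i) / r| ≤ t / r := by
          rw [abs_div, abs_of_pos hr]
          gcongr
          exact (hx i).le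
        linarith
      exact_mod_cast h1
    · intro i
      exact (hmem i).trans_lt (by linarith)
  · -- bounded overlap
    intro x
    by_cases hxS : x ∈ Q z s
    · rw [Set.indicator_of_mem hxS, mul_one]
      set I := Fintype.piFinset (fun _ : Fin 2 => Finset.Icc (-K) K) with hI
      have e1 : ∑ k ∈ I, (Q (fun i => z i + r * (k i : ℝ)) (2 * r)).indicator
            (fun _ => (1 : ℝ≥0∞)) x
          = ((I.filter (fun k => x ∈ Q (fun i => z i + r * (k i : ℝ)) (2 * r))).card : ℝ≥0∞) := by
        rw [Finset.card_eq_sum_ones, Nat.cast_sum]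
        rw [Finset.sum_filter]
        refine Finset.sum_congr rfl fun k _ => ?_
        by_cases h : x ∈ Q (fun i => z i + r * (k i : ℝ)) (2 * r) <;>
          simp [Set.indicator_apply, h]
      rw [e1]
      have hsub : I.filter (fun k => x ∈ Q (fun i => z i + r * (k i : ℝ)) (2 * r))
          ⊆ Fintype.piFinset (fun i : Fin 2 =>
              Finset.Icc (⌊(x i - z i) / r⌋ - 1) (⌊(x i - z i) / r⌋ + 2)) := by
        intro k hk
        rw [Finset.mem_filter] at hk
        obtain ⟨-, hxk⟩ := hk
        rw [Fintype.mem_piFinset]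
        intro i
        have h1 : |x i - (z i + r * (k i : ℝ))| < 2 * r := hxk i
        have h2 : |(x i - z i) / r - (k i : ℝ)| < 2 := by
          have e : (x i - z i) / r - (k i : ℝ) = (x i - (z i + r * (k i : ℝ))) / r := by
            field_simp
            ring
          rw [e, abs_div, abs_of_pos hr, div_lt_iff₀ hr]
          linarith
        rw [abs_sub_lt_iff] at h2
        rw [Finset.mem_Icc]
        constructor
        · have : (⌊(x i - z i) / r⌋ : ℝ) - 2 < (k i : ℝ) := by
            have := Int.floor_le ((x i - z i) / r)
            linarith
          have : (⌊(x i - z i) / r⌋ : ℤ) - 2 < k i := by exact_mod_cast this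
          omega
        · have : (k i : ℝ) < (⌊(x i - z i) / r⌋ : ℝ) + 3 := by
            have := Int.lt_floor_add_one ((x i - z i) / r)
            linarith
          have : k i < (⌊(x i - z i) / r⌋ : ℤ) + 3 := by exact_mod_cast this
          omega
      have hcard := Finset.card_le_card hsub
      have hc16 : (Fintype.piFinset (fun i : Fin 2 =>
          Finset.Icc (⌊(x i - z i) / r⌋ - 1) (⌊(x i - z i) / r⌋ + 2))).card = 16 := by
        rw [Fintype.card_piFinset]
        have : ∀ i : Fin 2, (Finset.Icc (⌊(x i - z i) / r⌋ - 1) (⌊(x i - z i) / r⌋ + 2)).card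
            = 4 := by
          intro i
          rw [Int.card_Icc, show ⌊(x i - z i) / r⌋ + 2 + 1 - (⌊(x i - z i) / r⌋ - 1) = (4 : ℤ)
            from by ring]
          rfl
        simp [this]
      calc ((I.filter (fun k => x ∈ Q (fun i => z i + r * (k i : ℝ)) (2 * r))).card : ℝ≥0∞)
          ≤ (16 : ℕ) := by exact_mod_cast hcard.trans_eq hc16
        _ = 16 := by norm_num
    · rw [Set.indicator_of_notMem hxS, mul_zero]
      rw [Finset.sum_eq_zero fun k hk =>
        Set.indicator_of_notMem (fun hxk => hxS (hincl k hk hxk)) _]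

lemma step {ℓ : ℕ} (α : Fin ℓ → ℝ) (μ : Measure (Fin 2 → ℝ))
    (ν : Fin ℓ → Measure (Fin 2 → ℝ)) (dδ cC : ℝ≥0∞)
    (H : ∀ (y : Fin 2 → ℝ) (r : ℝ), 0 < r → μ (Q y r) ≤ dδ * μ (Q y (2 * r))
        + cC * ∑ j, ENNReal.ofReal (r ^ (-(α j))) * ν j (Q y (2 * r)))
    (z : Fin 2 → ℝ) {t r s : ℝ} (ht : 0 < t) (hr : 0 < r) (hs : t + 4 * r ≤ s) :
    μ (Q z t) ≤ 16 * dδ * μ (Q z s)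
      + 16 * cC * ∑ j, ENNReal.ofReal (r ^ (-(α j))) * ν j (Q z s) := by
  obtain ⟨I, ctr, hcov, hsub, hind⟩ := cover z ht hr hs
  have hover : ∀ m : Measure (Fin 2 → ℝ),
      ∑ k ∈ I, m (Q (ctr k) (2 * r)) ≤ 16 * m (Q z s) :=
    fun m => overlap m I (fun k => Q (ctr k) (2 * r)) (Q z s) (measurableSet_Q z s)
      (fun k => measurableSet_Q _ _) 16 hind
  calc μ (Q z t) ≤ μ (⋃ k ∈ I, Q (ctr k) r) := measure_mono hcov
    _ ≤ ∑ k ∈ I, μ (Q (ctr k) r) := measure_biUnion_finset_le I _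
    _ ≤ ∑ k ∈ I, (dδ * μ (Q (ctr k) (2 * r))
          + cC * ∑ j, ENNReal.ofReal (r ^ (-(α j))) * ν j (Q (ctr k) (2 * r))) :=
        Finset.sum_le_sum fun k _ => H (ctr k) r hr
    _ = dδ * ∑ k ∈ I, μ (Q (ctr k) (2 * r))
          + cC * ∑ j, ENNReal.ofReal (r ^ (-(α j))) * ∑ k ∈ I, ν j (Q (ctr k) (2 * r)) := by
        rw [Finset.sum_add_distrib, ← Finset.mul_sum]
        congr 1
        rw [← Finset.mul_sum]
        congr 1
        rw [Finset.sum_comm]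
        exact Finset.sum_congr rfl fun j _ => (Finset.mul_sum _ _ _).symm
    _ ≤ dδ * (16 * μ (Q z s))
          + cC * ∑ j, ENNReal.ofReal (r ^ (-(α j))) * (16 * ν j (Q z s)) := by
        gcongr
        · exact hover μ
        · exact hover (ν _)
    _ = 16 * dδ * μ (Q z s)
          + 16 * cC * ∑ j, ENNReal.ofReal (r ^ (-(α j))) * ν j (Q z s) := by
        rw [Finset.mul_sum, Finset.mul_sum]
        congr 1
        · ring
        · exact Finset.sum_congr rfl fun j _ => by ring

end GMaux

open GMaux ENNReal

/-- **Lemma 2.1 (Giaquinta–Modica type lemma).** Given exponents `α₁, …, α_ℓ > 0` there is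
`δ₀ > 0` (depending only on the exponents) such that: for nonnegative locally integrable
`f, f₁, …, f_ℓ`, if for some `δ ∈ (0, δ₀)` and constant `C(δ) > 0` the hole-filling
inequality holds on all squares, then
`∫_{Q_R(z)} f ≤ C Σⱼ R^{−αⱼ} ∫_{Q_{2R}(z)} fⱼ` on all squares. -/
theorem giaquinta_modica (ℓ : ℕ) (α : Fin ℓ → ℝ) (hα : ∀ j, 0 < α j) :
    ∃ δ₀ : ℝ, 0 < δ₀ ∧
      ∀ (f : (Fin 2 → ℝ) → ℝ) (F : Fin ℓ → (Fin 2 → ℝ) → ℝ),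
        (∀ x, 0 ≤ f x) → (∀ j x, 0 ≤ F j x) →
        MeasureTheory.LocallyIntegrable f volume →
        (∀ j, MeasureTheory.LocallyIntegrable (F j) volume) →
        ∀ δ : ℝ, 0 < δ → δ < δ₀ →
        ∀ Cδ : ℝ, 0 < Cδ →
        (∀ (z : Fin 2 → ℝ) (R : ℝ), 0 < R →
          (∫ x in Q z R, f x) ≤ δ * (∫ x in Q z (2 * R), f x)
            + Cδ * ∑ j, R ^ (-(α j)) * ∫ x in Q z (2 * R), F j x) →
        ∃ C : ℝ, ∀ (z : Fin 2 → ℝ) (R : ℝ), 0 < R →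
          (∫ x in Q z R, f x) ≤ C * ∑ j, R ^ (-(α j)) * ∫ x in Q z (2 * R), F j x := by
  classical
  set A : ℝ := ∑ j, α j with hA
  have hA0 : 0 ≤ A := Finset.sum_nonneg fun j _ => (hα j).le
  have hαA : ∀ j, α j ≤ A :=
    fun j => Finset.single_le_sum (fun i _ => (hα i).le) (Finset.mem_univ j)
  refine ⟨(2 : ℝ) ^ (-(A + 5)), Real.rpow_pos_of_pos two_pos _, ?_⟩
  intro f F hf0 hF0 hfl hFl δ hδ0 hδδ₀ Cδ hCδ hyp
  set μ : Measure (Fin 2 → ℝ) := volume.withDensity fun x => ENNReal.ofReal (f x) with hμ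
  set ν : Fin ℓ → Measure (Fin 2 → ℝ) :=
    fun j => volume.withDensity fun x => ENNReal.ofReal (F j x) with hν
  have hENN : ∀ (y : Fin 2 → ℝ) (r : ℝ), 0 < r →
      μ (Q y r) ≤ ENNReal.ofReal δ * μ (Q y (2 * r))
        + ENNReal.ofReal Cδ * ∑ j, ENNReal.ofReal (r ^ (-(α j))) * ν j (Q y (2 * r)) := by
    intro y r hr
    have e1 : μ (Q y r) = ENNReal.ofReal (∫ x in Q y r, f x) := by
      rw [setIntegral_eq_toReal hf0 hfl, ENNReal.ofReal_toReal (meas_Q_ne_top hf0 hfl y r)]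
    have e2 : ENNReal.ofReal (∫ x in Q y (2 * r), f x) = μ (Q y (2 * r)) := by
      rw [setIntegral_eq_toReal hf0 hfl, ENNReal.ofReal_toReal (meas_Q_ne_top hf0 hfl y (2 * r))]
    have e3 : ∀ j, ENNReal.ofReal (∫ x in Q y (2 * r), F j x) = ν j (Q y (2 * r)) := fun j => by
      rw [setIntegral_eq_toReal (hF0 j) (hFl j),
        ENNReal.ofReal_toReal (meas_Q_ne_top (hF0 j) (hFl j) y (2 * r))]
    rw [e1]
    refine le_trans (ENNReal.ofReal_le_ofReal (hyp y r hr)) ?_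
    refine le_trans ENNReal.ofReal_add_le (add_le_add ?_ ?_)
    · rw [ENNReal.ofReal_mul hδ0.le, e2]
    · rw [ENNReal.ofReal_mul hCδ.le,
        ENNReal.ofReal_sum_of_nonneg (fun j _ => mul_nonneg (Real.rpow_nonneg hr.le _)
          (MeasureTheory.integral_nonneg (fun x => hF0 j x)))]
      refine mul_le_mul_right (Finset.sum_le_sum fun j _ => ?_) _
      rw [ENNReal.ofReal_mul (Real.rpow_nonneg hr.le _), e3 j]
  refine ⟨32 * Cδ * (2 : ℝ) ^ (3 * A), ?_⟩
  intro z R hR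
  set q : ℝ≥0∞ := ENNReal.ofReal ((2 : ℝ) ^ A) with hq
  set θ : ℝ≥0∞ := 16 * ENNReal.ofReal δ with hθ
  set D : ℝ≥0∞ := 16 * ENNReal.ofReal Cδ * ENNReal.ofReal ((2 : ℝ) ^ (3 * A))
    * ∑ j, ENNReal.ofReal (R ^ (-(α j))) * ν j (Q z (2 * R)) with hD
  have hνfin : ∀ j, ν j (Q z (2 * R)) ≠ ∞ := fun j => meas_Q_ne_top (hF0 j) (hFl j) z (2 * R)
  have htpos : ∀ n : ℕ, 0 < 2 * R - R / 2 ^ n := by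
    intro n
    have h1 : (1 : ℝ) ≤ 2 ^ n := one_le_pow₀ one_le_two
    have h2 : R / 2 ^ n ≤ R := div_le_self hR.le h1
    linarith
  have htle : ∀ n : ℕ, 2 * R - R / 2 ^ n ≤ 2 * R := by
    intro n
    have : (0 : ℝ) < 2 ^ n := by positivity
    have : 0 ≤ R / 2 ^ n := by positivity
    linarith
  -- coefficient bound
  have hcoef : ∀ (n : ℕ) (j : Fin ℓ),
      (R / 2 ^ (n + 3)) ^ (-(α j)) ≤ (2 : ℝ) ^ (3 * A) * ((2 : ℝ) ^ A) ^ n * R ^ (-(α j)) := by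
    intro n j
    have h2n : (0 : ℝ) < (2 : ℝ) ^ (n + 3) := by positivity
    have e1 : (R / 2 ^ (n + 3)) ^ (-(α j)) = R ^ (-(α j)) * ((2 : ℝ) ^ (n + 3)) ^ (α j) := by
      rw [div_eq_mul_inv, Real.mul_rpow hR.le (by positivity), Real.inv_rpow h2n.le,
        Real.rpow_neg h2n.le, inv_inv]
    have e2 : ((2 : ℝ) ^ (n + 3)) ^ (α j) = (2 : ℝ) ^ (((n : ℝ) + 3) * α j) := by
      rw [← Real.rpow_natCast (2 : ℝ) (n + 3), ← Real.rpow_mul (by norm_num)]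
      push_cast
      ring_nf
    have hle : ((n : ℝ) + 3) * α j ≤ 3 * A + A * n := by
      have h1 : (n : ℝ) * α j ≤ (n : ℝ) * A :=
        mul_le_mul_of_nonneg_left (hαA j) (Nat.cast_nonneg n)
      have h2 : 3 * α j ≤ 3 * A := by linarith [hαA j]
      nlinarith
    have e3 : (2 : ℝ) ^ (3 * A + A * (n : ℝ)) = (2 : ℝ) ^ (3 * A) * ((2 : ℝ) ^ A) ^ n := by
      rw [Real.rpow_add two_pos]
      congr 1
      rw [← Real.rpow_natCast ((2 : ℝ) ^ A) n, ← Real.rpow_mul (by norm_num)]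
    calc (R / 2 ^ (n + 3)) ^ (-(α j))
        = R ^ (-(α j)) * ((2 : ℝ) ^ (n + 3)) ^ (α j) := e1
      _ ≤ R ^ (-(α j)) * ((2 : ℝ) ^ (3 * A) * ((2 : ℝ) ^ A) ^ n) := by
          rw [e2]
          refine mul_le_mul_of_nonneg_left ?_ (Real.rpow_nonneg hR.le _)
          rw [← e3]
          exact Real.rpow_le_rpow_of_exponent_le one_le_two hle
      _ = (2 : ℝ) ^ (3 * A) * ((2 : ℝ) ^ A) ^ n * R ^ (-(α j)) := by ring
  -- one iteration step
  have hstep : ∀ n : ℕ, μ (Q z (2 * R - R / 2 ^ n))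
      ≤ θ * μ (Q z (2 * R - R / 2 ^ (n + 1))) + q ^ n * D := by
    intro n
    have hr : (0 : ℝ) < R / 2 ^ (n + 3) := by positivity
    have harith : (2 * R - R / 2 ^ n) + 4 * (R / 2 ^ (n + 3)) = 2 * R - R / 2 ^ (n + 1) := by
      have h1 : ((2 : ℝ)) ^ (n + 3) = 2 ^ n * 8 := by rw [pow_add]; norm_num
      have h2 : ((2 : ℝ)) ^ (n + 1) = 2 ^ n * 2 := by rw [pow_add]; norm_num
      have h3 : (0 : ℝ) < 2 ^ n := by positivity
      field_simp [h1, h2]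
      ring
    have hst := step α μ ν (ENNReal.ofReal δ) (ENNReal.ofReal Cδ) hENN z (htpos n) hr
      harith.le
    refine hst.trans ?_
    rw [hθ]
    refine add_le_add_right ?_ _
    have hbound2 : ∀ j : Fin ℓ,
        ENNReal.ofReal ((R / 2 ^ (n + 3)) ^ (-(α j))) * ν j (Q z (2 * R - R / 2 ^ (n + 1)))
          ≤ ENNReal.ofReal ((2 : ℝ) ^ (3 * A)) * q ^ n
            * (ENNReal.ofReal (R ^ (-(α j))) * ν j (Q z (2 * R))) := by
      intro j
      have hν2 : ν j (Q z (2 * R - R / 2 ^ (n + 1))) ≤ ν j (Q z (2 * R)) :=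
        measure_mono (Q_mono z (htle (n + 1)))
      have hc : ENNReal.ofReal ((R / 2 ^ (n + 3)) ^ (-(α j)))
          ≤ ENNReal.ofReal ((2 : ℝ) ^ (3 * A)) * q ^ n * ENNReal.ofReal (R ^ (-(α j))) := by
        refine le_trans (ENNReal.ofReal_le_ofReal (hcoef n j)) ?_
        rw [ENNReal.ofReal_mul (by positivity), ENNReal.ofReal_mul (by positivity), hq,
          ENNReal.ofReal_pow (by positivity)]
      calc ENNReal.ofReal ((R / 2 ^ (n + 3)) ^ (-(α j)))
            * ν j (Q z (2 * R - R / 2 ^ (n + 1)))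
          ≤ (ENNReal.ofReal ((2 : ℝ) ^ (3 * A)) * q ^ n * ENNReal.ofReal (R ^ (-(α j))))
            * ν j (Q z (2 * R)) := mul_le_mul' hc hν2
        _ = ENNReal.ofReal ((2 : ℝ) ^ (3 * A)) * q ^ n
            * (ENNReal.ofReal (R ^ (-(α j))) * ν j (Q z (2 * R))) := by ring
    calc 16 * ENNReal.ofReal Cδ
          * ∑ j, ENNReal.ofReal ((R / 2 ^ (n + 3)) ^ (-(α j)))
            * ν j (Q z (2 * R - R / 2 ^ (n + 1)))
        ≤ 16 * ENNReal.ofReal Cδ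
          * ∑ j, ENNReal.ofReal ((2 : ℝ) ^ (3 * A)) * q ^ n
            * (ENNReal.ofReal (R ^ (-(α j))) * ν j (Q z (2 * R))) := by
          exact mul_le_mul_right (Finset.sum_le_sum fun j _ => hbound2 j) _
      _ = q ^ n * D := by
          rw [hD, ← Finset.mul_sum]
          ring
  -- iteration
  have hiter : ∀ n : ℕ, μ (Q z R)
      ≤ θ ^ n * μ (Q z (2 * R - R / 2 ^ n)) + (∑ m ∈ Finset.range n, (θ * q) ^ m) * D := by
    intro n
    induction n with
    | zero =>
      have e : 2 * R - R / 2 ^ (0 : ℕ) = R := by rw [pow_zero, div_one]; ring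
      rw [e]
      simp
    | succ n ih =>
      refine ih.trans ?_
      calc θ ^ n * μ (Q z (2 * R - R / 2 ^ n)) + (∑ m ∈ Finset.range n, (θ * q) ^ m) * D
          ≤ θ ^ n * (θ * μ (Q z (2 * R - R / 2 ^ (n + 1))) + q ^ n * D)
            + (∑ m ∈ Finset.range n, (θ * q) ^ m) * D := by
            exact add_le_add_left (mul_le_mul_right (hstep n) _) _
        _ = θ ^ (n + 1) * μ (Q z (2 * R - R / 2 ^ (n + 1)))
            + ((∑ m ∈ Finset.range n, (θ * q) ^ m) + (θ * q) ^ n) * D := by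
            rw [mul_pow]
            ring
        _ = θ ^ (n + 1) * μ (Q z (2 * R - R / 2 ^ (n + 1)))
            + (∑ m ∈ Finset.range (n + 1), (θ * q) ^ m) * D := by
            rw [Finset.sum_range_succ]
  -- smallness of θ and θ*q
  have hq1 : (1 : ℝ≥0∞) ≤ q := by
    rw [hq, ← ENNReal.ofReal_one]
    exact ENNReal.ofReal_le_ofReal (Real.one_le_rpow one_le_two hA0)
  have hθq : θ * q ≤ 2⁻¹ := by
    have h16 : θ * q = ENNReal.ofReal (16 * (δ * (2 : ℝ) ^ A)) := by
      rw [hθ, hq, ENNReal.ofReal_mul (by norm_num : (0:ℝ) ≤ 16),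
        ENNReal.ofReal_mul hδ0.le]
      norm_num
      ring
    have hreal : 16 * (δ * (2 : ℝ) ^ A) ≤ 1 / 2 := by
      have h1 : δ * (2 : ℝ) ^ A ≤ (2 : ℝ) ^ (-(A + 5)) * (2 : ℝ) ^ A :=
        mul_le_mul_of_nonneg_right hδδ₀.le (Real.rpow_nonneg (by norm_num) _)
      have h2 : (2 : ℝ) ^ (-(A + 5)) * (2 : ℝ) ^ A = (2 : ℝ) ^ (-(5 : ℝ)) := by
        rw [← Real.rpow_add two_pos]
        norm_num
      have h3 : (2 : ℝ) ^ (-(5 : ℝ)) = 1 / 32 := by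
        rw [Real.rpow_neg (by norm_num), show (5 : ℝ) = ((5 : ℕ) : ℝ) by norm_num,
          Real.rpow_natCast]
        norm_num
      rw [h2, h3] at h1
      linarith
    rw [h16]
    calc ENNReal.ofReal (16 * (δ * (2 : ℝ) ^ A)) ≤ ENNReal.ofReal (1 / 2) :=
          ENNReal.ofReal_le_ofReal hreal
      _ = 2⁻¹ := by
          rw [one_div, ENNReal.ofReal_inv_of_pos (by norm_num)]
          norm_num
  have hθ2 : θ ≤ 2⁻¹ := by
    calc θ = θ * 1 := (mul_one θ).symm
      _ ≤ θ * q := mul_le_mul_right hq1 _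
      _ ≤ 2⁻¹ := hθq
  have hθ1 : θ < 1 := lt_of_le_of_lt hθ2 (by
    rw [ENNReal.inv_lt_one]
    exact one_lt_two)
  -- geometric sum bound
  have hsum : ∀ n : ℕ, (∑ m ∈ Finset.range n, (θ * q) ^ m) ≤ 2 := by
    intro n
    induction n with
    | zero => simp
    | succ n ih =>
      rw [Finset.sum_range_succ']
      simp only [pow_succ', pow_zero]
      rw [← Finset.mul_sum]
      calc (θ * q) * ∑ m ∈ Finset.range n, (θ * q) ^ m + 1
          ≤ 2⁻¹ * 2 + 1 := add_le_add_left (mul_le_mul' hθq ih) 1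
        _ = 2 := by
            rw [ENNReal.inv_mul_cancel (by norm_num) (by norm_num)]
            norm_num
  have hM : μ (Q z (2 * R)) ≠ ∞ := meas_Q_ne_top hf0 hfl z (2 * R)
  have hbound : ∀ n : ℕ, μ (Q z R) ≤ θ ^ n * μ (Q z (2 * R)) + 2 * D := by
    intro n
    refine (hiter n).trans (add_le_add ?_ (mul_le_mul_left (hsum n) D))
    exact mul_le_mul_right (measure_mono (Q_mono z (htle n))) _
  have hfinal : μ (Q z R) ≤ 2 * D := by
    have hlim : Filter.Tendsto (fun n : ℕ => θ ^ n * μ (Q z (2 * R)) + 2 * D)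
        Filter.atTop (𝓝 (0 * μ (Q z (2 * R)) + 2 * D)) := by
      exact Filter.Tendsto.add
        (ENNReal.Tendsto.mul_const (ENNReal.tendsto_pow_atTop_nhds_zero_of_lt_one hθ1)
          (Or.inr hM)) tendsto_const_nhds
    have := ge_of_tendsto hlim (Filter.Eventually.of_forall hbound)
    simpa using this
  -- convert back to the real-valued statement
  have hDfin : D ≠ ∞ := by
    rw [hD]
    refine ENNReal.mul_ne_top (ENNReal.mul_ne_top (ENNReal.mul_ne_top (by norm_num)
      ENNReal.ofReal_ne_top) ENNReal.ofReal_ne_top) ?_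
    refine (ENNReal.sum_lt_top.2 fun j _ => ?_).ne
    exact ENNReal.mul_lt_top ENNReal.ofReal_lt_top (hνfin j).lt_top
  have h2D : (2 : ℝ≥0∞) * D ≠ ∞ := ENNReal.mul_ne_top (by norm_num) hDfin
  have hmono := ENNReal.toReal_mono h2D hfinal
  rw [setIntegral_eq_toReal hf0 hfl]
  refine hmono.trans (le_of_eq ?_)
  rw [hD]
  rw [ENNReal.toReal_mul, ENNReal.toReal_mul, ENNReal.toReal_mul, ENNReal.toReal_mul,
    ENNReal.toReal_ofReal hCδ.le, ENNReal.toReal_ofReal (by positivity),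
    ENNReal.toReal_sum (fun j _ => ENNReal.mul_ne_top ENNReal.ofReal_ne_top (hνfin j))]
  have e4 : ∀ j : Fin ℓ, (ENNReal.ofReal (R ^ (-(α j))) * ν j (Q z (2 * R))).toReal
      = R ^ (-(α j)) * ∫ x in Q z (2 * R), F j x := by
    intro j
    rw [ENNReal.toReal_mul, ENNReal.toReal_ofReal (Real.rpow_nonneg hR.le _),
      setIntegral_eq_toReal (hF0 j) (hFl j)]
  rw [Finset.sum_congr rfl fun j _ => e4 j]
  norm_num
  ring
end
end

section
/- Let h : [0,∞) → ℝ be a nonnegative C² function satisfying (A1)–(A3), and define H on the space S^{2×2} of symmetric 2×2 real matrices by H(ε) = h(|ε|). Then for every nonzero ε ∈ S^{2×2} and every σ ∈ S^{2×2} one has (h'(|ε|)/|ε|) |σ|² ≤ D²H(ε)(σ, σ) ≤ h''(|ε|) |σ|², where D²H(ε) denotes the second derivative (Hessian bilinear form) of H at ε and |·| is the Euclidean (Frobenius) norm. -/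
open MeasureTheory Filter Set Topology

set_option maxHeartbeats 1000000

noncomputable section

open RealInnerProductSpace in
lemma hasFDerivAt_norm_of_ne {E : Type*} [NormedAddCommGroup E] [InnerProductSpace ℝ E]
    {e : E} (he : e ≠ 0) :
    HasFDerivAt (fun x : E => ‖x‖) (‖e‖⁻¹ • innerSL ℝ e) e := by
  have hr : ‖e‖ ≠ 0 := norm_ne_zero_iff.mpr he
  have hs : (‖e‖ ^ 2 : ℝ) ≠ 0 := pow_ne_zero _ hr
  have h1 : HasFDerivAt (fun x : E => ‖x‖ ^ 2) (2 • innerSL ℝ e) e :=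
    (hasStrictFDerivAt_norm_sq e).hasFDerivAt
  have h2 := (Real.hasDerivAt_sqrt hs).comp_hasFDerivAt e h1
  have heq : (fun x : E => Real.sqrt (‖x‖ ^ 2)) = fun x : E => ‖x‖ := by
    funext x; exact Real.sqrt_sq (norm_nonneg x)
  simp only [Function.comp_def] at h2
  rw [heq] at h2
  refine h2.congr_fderiv ?_
  rw [Real.sqrt_sq (norm_nonneg e)]
  ext y
  simp [smul_smul]
  field_simp

/-- **Ellipticity (2.5).** For `H(ε) = h(|ε|)` on symmetric 2×2 matrices and (A1)–(A3):
for every nonzero symmetric `ε` and symmetric `σ`,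
`(h'(|ε|)/|ε|) |σ|² ≤ D²H(ε)(σ,σ) ≤ h''(|ε|) |σ|²`. -/
theorem hessian_ellipticity (h : ℝ → ℝ) (hh : HypH h) (ε σ : Emat)
    (hε : ε ≠ 0) (hεsym : symmE ε) (hσsym : symmE σ) :
    (deriv h ‖ε‖ / ‖ε‖) * ‖σ‖ ^ 2 ≤ D2H h ε σ ∧
      D2H h ε σ ≤ deriv (deriv h) ‖ε‖ * ‖σ‖ ^ 2 := by
  open RealInnerProductSpace in
  set r : ℝ := ‖ε‖ with hr
  have rpos : 0 < r := norm_pos_iff.mpr hε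
  have rne : r ≠ 0 := ne_of_gt rpos
  have hd1 : Differentiable ℝ h := hh.smooth.differentiable (by norm_num)
  have hsm2 : ContDiff ℝ ((1 : ℕ) + 1) h := by exact_mod_cast hh.smooth
  have hd2 : Differentiable ℝ (deriv h) :=
    ((contDiff_succ_iff_deriv.mp hsm2).2.2).differentiable (by norm_num)
  set f : Emat → ℝ := fun x => h ‖x‖ with hf
  -- derivative of f away from 0
  have hfd : ∀ x : Emat, x ≠ 0 →
      HasFDerivAt f ((deriv h ‖x‖ * ‖x‖⁻¹) • innerSL ℝ x) x := by
    intro x hx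
    have := ((hd1 ‖x‖).hasDerivAt).comp_hasFDerivAt x (hasFDerivAt_norm_of_ne hx)
    simpa [Function.comp_def, smul_smul] using this
  have hne : ∀ᶠ x : Emat in nhds ε, x ≠ 0 :=
    isOpen_ne.mem_nhds hε
  set c : Emat → ℝ := fun x => deriv h ‖x‖ * ‖x‖⁻¹ with hc
  set G : Emat → ℝ := fun x => c x * inner ℝ x σ with hG
  have hfev : (fun x => fderiv ℝ f x σ) =ᶠ[nhds ε] G := by
    filter_upwards [hne] with x hx
    rw [(hfd x hx).fderiv]
    simp only [ContinuousLinearMap.smul_apply, innerSL_apply_apply, smul_eq_mul, hG, hc]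
  -- derivative of G at ε
  set N : Emat →L[ℝ] ℝ := r⁻¹ • innerSL ℝ ε with hN
  have hNd : HasFDerivAt (fun x : Emat => ‖x‖) N ε := hasFDerivAt_norm_of_ne hε
  have hc1 : HasFDerivAt (fun x : Emat => deriv h ‖x‖) (deriv (deriv h) r • N) ε :=
    ((hd2 r).hasDerivAt).comp_hasFDerivAt (h₂ := deriv h) ε hNd
  have hc2 : HasFDerivAt (fun x : Emat => ‖x‖⁻¹) ((-(r ^ 2)⁻¹) • N) ε :=
    (hasDerivAt_inv rne).comp_hasFDerivAt ε hNd
  have hcd : HasFDerivAt c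
      (deriv h r • ((-(r ^ 2)⁻¹) • N) + r⁻¹ • (deriv (deriv h) r • N)) ε := hc1.mul hc2
  have hid : HasFDerivAt (fun x : Emat => (inner ℝ x σ : ℝ)) (innerSL ℝ σ) ε := by
    have h0 : (fun x : Emat => (inner ℝ x σ : ℝ)) = fun x => innerSL ℝ σ x := by
      funext x; rw [innerSL_apply_apply]; exact real_inner_comm σ x
    rw [h0]
    exact (innerSL ℝ σ).hasFDerivAt
  have hGd : HasFDerivAt G
      (c ε • innerSL ℝ σ + (inner ℝ ε σ : ℝ) •
        (deriv h r • ((-(r ^ 2)⁻¹) • N) + r⁻¹ • (deriv (deriv h) r • N))) ε := hcd.mul hid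
  -- rewrite D2H
  have hcda : ContDiffAt ℝ 2 f ε :=
    hh.smooth.contDiffAt.comp ε (contDiffAt_norm ℝ hε)
  have hdf : DifferentiableAt ℝ (fderiv ℝ f) ε :=
    (hcda.fderiv_right (m := 1) (by norm_num)).differentiableAt (by norm_num)
  have key : D2H h ε σ = fderiv ℝ (fun x => fderiv ℝ f x σ) ε σ := by
    rw [D2H, iteratedFDeriv_two_apply]
    have := fderiv_clm_apply (c := fderiv ℝ f) (u := fun _ : Emat => σ) (x := ε)
      hdf (differentiableAt_const σ)
    simp only [fderiv_fun_const, Pi.zero_apply, ContinuousLinearMap.comp_zero, zero_add] at this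
    simp only [Matrix.cons_val_zero, Matrix.cons_val_one, Matrix.head_cons]
    rw [this]
    simp
    rfl
  have key2 : fderiv ℝ (fun x => fderiv ℝ f x σ) ε = fderiv ℝ G ε := hfev.fderiv_eq
  have key3 : D2H h ε σ = (deriv h r * r⁻¹) * ‖σ‖ ^ 2 +
      (inner ℝ ε σ : ℝ) ^ 2 * (deriv h r * (-(r ^ 2)⁻¹) * r⁻¹ +
        r⁻¹ * (deriv (deriv h) r * r⁻¹)) := by
    rw [key, key2, hGd.fderiv]
    have hnσ : (‖σ‖ : ℝ) ^ 2 = ∑ p : Fin 2 × Fin 2, σ p ^ 2 := by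
      rw [← real_inner_self_eq_norm_sq]
      simp only [PiLp.inner_apply, RCLike.inner_apply, conj_trivial, sq]
    simp [hN, hc, smul_smul]
    rw [hnσ]
    ring
  set p : ℝ := (inner ℝ ε σ : ℝ) with hp
  have hcs : p ^ 2 ≤ r ^ 2 * ‖σ‖ ^ 2 := by
    have h1 := abs_real_inner_le_norm ε σ
    have h2 : |p| ^ 2 ≤ (r * ‖σ‖) ^ 2 := pow_le_pow_left₀ (abs_nonneg _) h1 2
    calc p ^ 2 = |p| ^ 2 := (sq_abs p).symm
      _ ≤ (r * ‖σ‖) ^ 2 := h2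
      _ = r ^ 2 * ‖σ‖ ^ 2 := by ring
  have hA3 : deriv h r / r ≤ deriv (deriv h) r := hh.A3 r rpos
  have key4 : D2H h ε σ = (deriv h r / r) * ‖σ‖ ^ 2 +
      (deriv (deriv h) r - deriv h r / r) * (p / r) ^ 2 := by
    rw [key3]
    field_simp
    ring
  constructor
  · rw [key4]
    have : 0 ≤ (deriv (deriv h) r - deriv h r / r) * (p / r) ^ 2 :=
      mul_nonneg (by linarith) (sq_nonneg _)
    linarith
  · rw [key4]
    have hq : (p / r) ^ 2 ≤ ‖σ‖ ^ 2 := by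
      rw [div_pow]
      rw [div_le_iff₀ (by positivity)]
      nlinarith [hcs]
    nlinarith [hq, sq_nonneg (p / r), hA3]
end
end

section
/- Let h : [0,∞) → ℝ be a nonnegative C² function satisfying (A1)–(A3), and define H on the space S^{2×2} of symmetric 2×2 real matrices by H(ε) = h(|ε|). Then for every nonzero ε ∈ S^{2×2} and every σ ∈ S^{2×2} one has D²H(ε)(σ, σ) ≥ h''(0) |σ|². -/
open MeasureTheory Filter Set Topology

noncomputable section

open scoped RealInnerProductSpace

lemma hasFDerivAt_inner_self (e : Emat) :
    HasFDerivAt (fun x : Emat => ⟪x, x⟫) ((2:ℝ) • (innerSL ℝ e)) e := by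
  have h := (hasFDerivAt_id e).inner ℝ (hasFDerivAt_id e)
  refine h.congr_fderiv ?_
  ext v
  simp [fderivInnerCLM_apply, real_inner_comm, mul_comm]
  ring

lemma step1 {h : ℝ → ℝ} (hdiff : Differentiable ℝ h) {e : Emat} (he : e ≠ 0) :
    HasFDerivAt (fun x : Emat => h ‖x‖) ((deriv h ‖e‖ / ‖e‖) • innerSL ℝ e) e := by
  have hr : (0:ℝ) < ‖e‖ := norm_pos_iff.2 he
  have hsq : Real.sqrt (‖e‖^2) = ‖e‖ := Real.sqrt_sq hr.le
  have h1 : HasDerivAt Real.sqrt (1/(2*‖e‖)) (‖e‖^2) := by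
    simpa [hsq] using Real.hasDerivAt_sqrt (by positivity : (‖e‖^2 : ℝ) ≠ 0)
  have h2 : HasDerivAt h (deriv h ‖e‖) (Real.sqrt (‖e‖^2)) := by
    rw [hsq]; exact (hdiff ‖e‖).hasDerivAt
  have h3 : HasDerivAt (fun s => h (Real.sqrt s)) (deriv h ‖e‖ * (1/(2*‖e‖))) (‖e‖^2) :=
    h2.comp _ h1
  have h3' : HasDerivAt (fun s => h (Real.sqrt s)) (deriv h ‖e‖ * (1/(2*‖e‖))) (⟪e,e⟫) := by
    rw [real_inner_self_eq_norm_sq]; exact h3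
  have h5 := HasDerivAt.comp_hasFDerivAt (f := fun x : Emat => ⟪x,x⟫) e h3' (hasFDerivAt_inner_self e)
  have hfun : ((fun s => h (Real.sqrt s)) ∘ (fun x : Emat => ⟪x,x⟫)) = fun x : Emat => h ‖x‖ := by
    funext x
    show h (Real.sqrt ⟪x,x⟫) = h ‖x‖
    rw [real_inner_self_eq_norm_sq, Real.sqrt_sq (norm_nonneg x)]
  rw [hfun] at h5
  refine h5.congr_fderiv ?_
  rw [smul_smul]
  congr 1
  field_simp

lemma step2 {h : ℝ → ℝ} (hdp : Differentiable ℝ (deriv h)) {e : Emat} (he : e ≠ 0) :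
    HasFDerivAt (fun x : Emat => deriv h ‖x‖ / ‖x‖)
      (((deriv (deriv h) ‖e‖ - deriv h ‖e‖ / ‖e‖) / ‖e‖^2) • innerSL ℝ e) e := by
  have hr : (0:ℝ) < ‖e‖ := norm_pos_iff.2 he
  have hsq : Real.sqrt (‖e‖^2) = ‖e‖ := Real.sqrt_sq hr.le
  have h1 : HasDerivAt Real.sqrt (1/(2*‖e‖)) (‖e‖^2) := by
    simpa [hsq] using Real.hasDerivAt_sqrt (by positivity : (‖e‖^2 : ℝ) ≠ 0)
  have h2 : HasDerivAt (deriv h) (deriv (deriv h) ‖e‖) (Real.sqrt (‖e‖^2)) := by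
    rw [hsq]; exact (hdp ‖e‖).hasDerivAt
  have hnum : HasDerivAt (fun s => deriv h (Real.sqrt s))
      (deriv (deriv h) ‖e‖ * (1/(2*‖e‖))) (‖e‖^2) := h2.comp _ h1
  have hden_ne : Real.sqrt (‖e‖^2) ≠ 0 := by rw [hsq]; exact hr.ne'
  have hb : HasDerivAt (fun s => deriv h (Real.sqrt s) / Real.sqrt s)
      ((deriv (deriv h) ‖e‖ * (1/(2*‖e‖)) * Real.sqrt (‖e‖^2)
        - deriv h (Real.sqrt (‖e‖^2)) * (1/(2*‖e‖))) / (Real.sqrt (‖e‖^2))^2) (‖e‖^2) :=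
    hnum.div h1 hden_ne
  rw [hsq] at hb
  have hb' : HasDerivAt (fun s => deriv h (Real.sqrt s) / Real.sqrt s)
      ((deriv (deriv h) ‖e‖ * (1/(2*‖e‖)) * ‖e‖ - deriv h ‖e‖ * (1/(2*‖e‖))) / ‖e‖^2)
      (⟪e,e⟫) := by
    rw [real_inner_self_eq_norm_sq]; exact hb
  have h5 := HasDerivAt.comp_hasFDerivAt (f := fun x : Emat => ⟪x,x⟫) e hb'
    (hasFDerivAt_inner_self e)
  have hfun : ((fun s => deriv h (Real.sqrt s) / Real.sqrt s) ∘ fun x : Emat => ⟪x,x⟫)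
      = fun x : Emat => deriv h ‖x‖ / ‖x‖ := by
    funext x
    show deriv h (Real.sqrt ⟪x,x⟫) / Real.sqrt ⟪x,x⟫ = _
    rw [real_inner_self_eq_norm_sq, Real.sqrt_sq (norm_nonneg x)]
  rw [hfun] at h5
  refine h5.congr_fderiv ?_
  rw [smul_smul]
  congr 1
  field_simp


def innA : Emat →L[ℝ] Emat →L[ℝ] ℝ := innerSL ℝ

@[simp] lemma innA_apply (u v : Emat) : innA u v = ⟪u,v⟫ := rfl

lemma D2H_formula {h : ℝ → ℝ} (hsm : ContDiff ℝ 2 h) {ε σ : Emat} (hε : ε ≠ 0) :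
    iteratedFDeriv ℝ 2 (fun e : Emat => h ‖e‖) ε ![σ, σ]
      = (deriv h ‖ε‖ / ‖ε‖) * ‖σ‖^2
        + ((deriv (deriv h) ‖ε‖ - deriv h ‖ε‖ / ‖ε‖) / ‖ε‖^2) * ⟪ε,σ⟫^2 := by
  have hdiff : Differentiable ℝ h := hsm.differentiable (by norm_num)
  have hsm' : ContDiff ℝ ((1:ℕ∞)+1) h := by exact_mod_cast hsm
  have hdp : Differentiable ℝ (deriv h) :=
    (contDiff_succ_iff_deriv.mp hsm').2.2.differentiable (by simp)
  set G : Emat → (Emat →L[ℝ] ℝ) := fun e => (deriv h ‖e‖ / ‖e‖) • innA e with hGdef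
  have heq : fderiv ℝ (fun e : Emat => h ‖e‖) =ᶠ[𝓝 ε] G := by
    filter_upwards [eventually_ne_nhds hε] with e he
    exact (step1 hdiff he).fderiv
  have hG : HasFDerivAt G
      ((deriv h ‖ε‖ / ‖ε‖) • innA
        + (((deriv (deriv h) ‖ε‖ - deriv h ‖ε‖ / ‖ε‖) / ‖ε‖^2) • innA ε).smulRight
            (innA ε)) ε :=
    (step2 hdp hε).smul innA.hasFDerivAt
  rw [iteratedFDeriv_two_apply, heq.fderiv_eq, hG.fderiv]
  simp only [Matrix.cons_val_zero, Matrix.cons_val_one, Matrix.head_cons,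
    ContinuousLinearMap.add_apply, ContinuousLinearMap.smul_apply,
    ContinuousLinearMap.smulRight_apply, innA_apply, smul_eq_mul,
    real_inner_self_eq_norm_sq]
  ring

lemma h_at_zero {h : ℝ → ℝ} (hh : HypH h) : h 0 = 0 := by
  have t1 : Tendsto h (𝓝[>] (0:ℝ)) (𝓝 0) := by
    have hmul : Tendsto (fun t => (h t / t) * t) (𝓝[>] (0:ℝ)) (𝓝 (0 * 0)) :=
      hh.lim_zero.mul ((continuous_id.tendsto 0).mono_left nhdsWithin_le_nhds)
    rw [zero_mul] at hmul
    refine hmul.congr' ?_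
    filter_upwards [self_mem_nhdsWithin] with t ht
    exact div_mul_cancel₀ _ (ne_of_gt ht)
  have t2 : Tendsto h (𝓝[>] (0:ℝ)) (𝓝 (h 0)) :=
    (hh.smooth.continuous.tendsto 0).mono_left nhdsWithin_le_nhds
  exact tendsto_nhds_unique t2 t1

lemma deriv_h_zero {h : ℝ → ℝ} (hh : HypH h) : deriv h 0 = 0 := by
  have hdiff : Differentiable ℝ h := hh.smooth.differentiable (by norm_num)
  have hd := (hdiff 0).hasDerivAt
  rw [hasDerivAt_iff_tendsto_slope] at hd
  have hd' : Tendsto (slope h 0) (𝓝[>] (0:ℝ)) (𝓝 (deriv h 0)) :=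
    hd.mono_left (nhdsWithin_mono 0 (fun x hx => ne_of_gt hx))
  have hlim : Tendsto (fun t => h t / t) (𝓝[>] (0:ℝ)) (𝓝 (deriv h 0)) := by
    refine hd'.congr' ?_
    filter_upwards with t
    simp [slope_def_field, h_at_zero hh]
  exact tendsto_nhds_unique hlim hh.lim_zero

lemma lim_g {h : ℝ → ℝ} (hh : HypH h) :
    Tendsto (fun t => deriv h t / t) (𝓝[>] (0:ℝ)) (𝓝 (deriv (deriv h) 0)) := by
  have hsm' : ContDiff ℝ ((1:ℕ∞)+1) h := by exact_mod_cast hh.smooth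
  have hdp : Differentiable ℝ (deriv h) :=
    (contDiff_succ_iff_deriv.mp hsm').2.2.differentiable (by simp)
  have hd := (hdp 0).hasDerivAt
  rw [hasDerivAt_iff_tendsto_slope] at hd
  have hd' : Tendsto (slope (deriv h) 0) (𝓝[>] (0:ℝ)) (𝓝 (deriv (deriv h) 0)) :=
    hd.mono_left (nhdsWithin_mono 0 (fun x hx => ne_of_gt hx))
  refine Tendsto.congr' ?_ hd'
  filter_upwards with t
  simp [slope_def_field, deriv_h_zero hh]

lemma g_lower {h : ℝ → ℝ} (hh : HypH h) {t : ℝ} (ht : 0 < t) :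
    deriv (deriv h) 0 ≤ deriv h t / t := by
  have hsm' : ContDiff ℝ ((1:ℕ∞)+1) h := by exact_mod_cast hh.smooth
  have hdp : Differentiable ℝ (deriv h) :=
    (contDiff_succ_iff_deriv.mp hsm').2.2.differentiable (by simp)
  have hmono : MonotoneOn (fun s => deriv h s / s) (Ioi (0:ℝ)) := by
    apply monotoneOn_of_deriv_nonneg (convex_Ioi 0)
    · exact ContinuousOn.div hdp.continuous.continuousOn continuousOn_id
        (fun s hs => ne_of_gt hs)
    · intro s hs
      rw [interior_Ioi] at hs
      exact (((hdp s).hasDerivAt.div (hasDerivAt_id s)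
        (ne_of_gt hs)).differentiableAt).differentiableWithinAt
    · intro s hs
      rw [interior_Ioi] at hs
      have hds := ((hdp s).hasDerivAt.div (hasDerivAt_id s) (ne_of_gt hs)).deriv
      simp only [Pi.div_def, id] at hds
      rw [hds]
      have hA := hh.A3 s hs
      rw [div_le_iff₀ hs] at hA
      apply div_nonneg _ (sq_nonneg _)
      simpa using sub_nonneg.2 hA
  refine le_of_tendsto (lim_g hh) ?_
  filter_upwards [Ioo_mem_nhdsGT_of_mem (Set.left_mem_Ico.mpr ht)] with s hs
  exact hmono (mem_Ioi.2 hs.1) (mem_Ioi.2 ht) hs.2.le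

private theorem ellipt_aux {h : ℝ → ℝ} (hh : HypH h) (ε σ : Emat) (hε : ε ≠ 0) :
    deriv (deriv h) 0 * ‖σ‖ ^ 2 ≤ iteratedFDeriv ℝ 2 (fun e : Emat => h ‖e‖) ε ![σ, σ] := by
  have hr : (0:ℝ) < ‖ε‖ := norm_pos_iff.2 hε
  rw [D2H_formula hh.smooth hε]
  have h1 : deriv (deriv h) 0 ≤ deriv h ‖ε‖ / ‖ε‖ := g_lower hh hr
  have h2 : deriv h ‖ε‖ / ‖ε‖ ≤ deriv (deriv h) ‖ε‖ := hh.A3 _ hr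
  have h4 : (0:ℝ) ≤ ‖σ‖^2 := sq_nonneg _
  have h5 : 0 ≤ ((deriv (deriv h) ‖ε‖ - deriv h ‖ε‖ / ‖ε‖) / ‖ε‖^2) * ⟪ε,σ⟫^2 :=
    mul_nonneg (div_nonneg (sub_nonneg.2 h2) (sq_nonneg _)) (sq_nonneg _)
  nlinarith [mul_le_mul_of_nonneg_right h1 h4]

/-- **Lower ellipticity (2.6).** For `H(ε) = h(|ε|)` on symmetric 2×2 matrices and
(A1)–(A3): for every nonzero symmetric `ε` and symmetric `σ`,
`D²H(ε)(σ,σ) ≥ h''(0) |σ|²`. -/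
theorem hessian_lower_bound (h : ℝ → ℝ) (hh : HypH h) (ε σ : Emat)
    (hε : ε ≠ 0) (hεsym : symmE ε) (hσsym : symmE σ) :
    deriv (deriv h) 0 * ‖σ‖ ^ 2 ≤ D2H h ε σ := by
  exact ellipt_aux hh ε σ hε
end
end
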